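/- The welfare-maximizing allocation rule is monotone in each tenant's own bid: let J and J' be bid profiles with J'(l') = J(l') for all l' ≠ l and J'(l) ≥ J(l). If tenant l belongs to some VCG allocation under J, then tenant l belongs to some VCG allocation under J'. Moreover, if J'(l) > J(l) strictly and l belongs to some VCG allocation under J, then l belongs to every VCG allocation under J'. -/
import Mathlib


open Finset

variable {L : Type*}

/-- A set `S` of tenants is feasible if their total resource-block demand is at most `B`. -/
def Feasible (n : L → ℕ) (B : ℕ) (S : Finset L) : Prop :=
  ∑ i ∈ S, n i ≤ B

/-- Welfare of a set of tenants under per-unit bid profile `J`: `Σ_{l∈S} J(l)·n(l)`. -/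
noncomputable def welfare (n : L → ℕ) (J : L → ℝ) (S : Finset L) : ℝ :=
  ∑ i ∈ S, J i * (n i : ℝ)

/-- `S` is a VCG allocation under `J`: feasible and welfare-maximizing among feasible sets. -/
def IsVCGAlloc (n : L → ℕ) (B : ℕ) (J : L → ℝ) (S : Finset L) : Prop :=
  Feasible n B S ∧ ∀ T : Finset L, Feasible n B T → welfare n J T ≤ welfare n J S

/-- `max{W_J(S) : S feasible, l ∉ S}` (as the supremum of this finite nonempty set). -/
noncomputable def maxWithout (n : L → ℕ) (B : ℕ) (J : L → ℝ) (l : L) : ℝ :=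
  sSup {w : ℝ | ∃ S : Finset L, Feasible n B S ∧ l ∉ S ∧ welfare n J S = w}

/-- VCG payment of a winner `l ∈ S*`:
`p_J(l) = max{W_J(S) : S feasible, l ∉ S} − (W_J(S*) − J(l)·n(l))`. -/
noncomputable def payment (n : L → ℕ) (B : ℕ) (J : L → ℝ) (Sstar : Finset L) (l : L) : ℝ :=
  maxWithout n B J l - (welfare n J Sstar - J l * (n l : ℝ))

/-- Quasilinear utility of tenant `l` with true per-unit value `ι`
under outcome `(S*, VCG payments for J)`. -/
noncomputable def utility [DecidableEq L] (n : L → ℕ) (B : ℕ) (ι : ℝ) (J : L → ℝ)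
    (Sstar : Finset L) (l : L) : ℝ :=
  if l ∈ Sstar then ι * (n l : ℝ) - payment n B J Sstar l else 0

/-- Monotonicity of the welfare-maximizing allocation rule in a tenant's own bid:
if `J'` agrees with `J` off `l` and `J' l ≥ J l`, and `l` is in some VCG allocation
under `J`, then `l` is in some VCG allocation under `J'`; moreover, if `J' l > J l`
strictly, then `l` is in every VCG allocation under `J'`. -/
theorem vcg_alloc_monotone [Fintype L] [DecidableEq L]
    (n : L → ℕ) (B : ℕ) (hn : ∀ l, 1 ≤ n l)
    (l : L) (J J' : L → ℝ)
    (hagree : ∀ l', l' ≠ l → J' l' = J l') (hge : J l ≤ J' l) :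
    ((∃ S : Finset L, IsVCGAlloc n B J S ∧ l ∈ S) →
      ∃ S' : Finset L, IsVCGAlloc n B J' S' ∧ l ∈ S') ∧
    (J l < J' l → (∃ S : Finset L, IsVCGAlloc n B J S ∧ l ∈ S) →
      ∀ S' : Finset L, IsVCGAlloc n B J' S' → l ∈ S') := by

  have hmem : ∀ T : Finset L, l ∈ T →
      welfare n J' T = welfare n J T + (J' l - J l) * (n l : ℝ) := by
    intro T hl
    have : welfare n J' T - welfare n J T = (J' l - J l) * (n l : ℝ) := by
      unfold welfare
      rw [← Finset.sum_sub_distrib]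
      rw [Finset.sum_eq_single_of_mem l hl]
      · ring
      · intro i hi hne
        rw [hagree i hne]; ring
    linarith
  have hnot : ∀ T : Finset L, l ∉ T → welfare n J' T = welfare n J T := by
    intro T hl
    unfold welfare
    apply Finset.sum_congr rfl
    intro i hi
    rw [hagree i (fun h => hl (h ▸ hi))]
  constructor
  · rintro ⟨S, ⟨hSf, hSmax⟩, hlS⟩
    refine ⟨S, ⟨hSf, ?_⟩, hlS⟩
    intro T hT
    by_cases hlT : l ∈ T
    · rw [hmem T hlT, hmem S hlS]
      have := hSmax T hT; linarith
    · rw [hnot T hlT, hmem S hlS]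
      have := hSmax T hT
      have hpos : (0:ℝ) ≤ (J' l - J l) * (n l : ℝ) := by
        apply mul_nonneg (by linarith) (by positivity)
      linarith
  · rintro hlt ⟨S, ⟨hSf, hSmax⟩, hlS⟩ S' ⟨hS'f, hS'max⟩
    by_contra hlS'
    have h1 : welfare n J' S' = welfare n J S' := hnot S' hlS'
    have h2 : welfare n J' S = welfare n J S + (J' l - J l) * (n l : ℝ) := hmem S hlS
    have h3 := hSmax S' hS'f
    have h4 := hS'max S hSf
    have hpos : (0:ℝ) < (J' l - J l) * (n l : ℝ) := by
      apply mul_pos (by linarith)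
      exact_mod_cast Nat.lt_of_lt_of_le Nat.zero_lt_one (hn l)
    linarith
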